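/- arXiv:2604.25344 — 2 statements merged into one kernel-verified Lean document; each statement's English description precedes it below -/
import Mathlib

section
/- Let K be a simplicial complex. The following are equivalent: (1) K is HMF over Z/p for every prime p (i.e. for every nonempty J ⊆ [m], H̃_*(K_J; Z/p) is generated by missing-face classes); (2) K is HMF over Z and H̃_*(K_J; Z) is torsion-free for every nonempty J ⊆ [m]. -/
/-!
STATEMENT 8: for a finite simplicial complex `K` on `[m]`, the following are equivalent:
(1) `K` is HMF over `ℤ/p` for every prime `p`: for every nonempty `J ⊆ [m]`,
    `H̃_*(K_J; ℤ/p)` is generated by the missing-face classes of `K_J`;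
(2) `K` is HMF over `ℤ`, and `H̃_*(K_J; ℤ)` is torsion-free for every nonempty `J ⊆ [m]`.
Reduced homology is realised concretely as cycles modulo boundaries of the augmented
simplicial chain complex.
-/


/-- The boundary operator of the augmented simplicial chain complex on `Fin m`:
`d(e_J) = Σ_{j∈J} (−1)^{|J_{<j}|} e_{J∖{j}}`, extended linearly. -/
noncomputable def simplicialBoundary (R : Type*) [CommRing R] (m : ℕ) :
    (Finset (Fin m) → R) →ₗ[R] (Finset (Fin m) → R) :=
  Matrix.mulVecLin (Matrix.of fun τ J : Finset (Fin m) =>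
    ∑ j ∈ J, if J.erase j = τ then (-1 : R) ^ ((J.filter (· < j)).card) else 0)

/-- The submodule of chains supported on the faces of `K`. -/
noncomputable def chainsOn (R : Type*) [CommRing R] {m : ℕ} (K : Finset (Finset (Fin m))) :
    Submodule R (Finset (Fin m) → R) :=
  Submodule.pi Set.univ (fun σ => if σ ∈ K then (⊤ : Submodule R R) else ⊥)

/-- Cycles of the augmented simplicial chain complex of `K`. -/
noncomputable def cyclesOn (R : Type*) [CommRing R] {m : ℕ} (K : Finset (Finset (Fin m))) :
    Submodule R (Finset (Fin m) → R) :=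
  chainsOn R K ⊓ LinearMap.ker (simplicialBoundary R m)

/-- Boundaries of the augmented simplicial chain complex of `K`. -/
noncomputable def boundariesOn (R : Type*) [CommRing R] {m : ℕ} (K : Finset (Finset (Fin m))) :
    Submodule R (Finset (Fin m) → R) :=
  Submodule.map (simplicialBoundary R m) (chainsOn R K)

/-- The (total) reduced simplicial homology `H̃_*(K; R)`: cycles modulo boundaries. -/
noncomputable def redHomology (R : Type*) [CommRing R] {m : ℕ}
    (K : Finset (Finset (Fin m))) : Type _ :=
  ↥(cyclesOn R K) ⧸ ((boundariesOn R K).comap (cyclesOn R K).subtype)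

noncomputable instance (R : Type*) [CommRing R] {m : ℕ} (K : Finset (Finset (Fin m))) :
    AddCommGroup (redHomology R K) :=
  inferInstanceAs (AddCommGroup
    (↥(cyclesOn R K) ⧸ ((boundariesOn R K).comap (cyclesOn R K).subtype)))

noncomputable instance (R : Type*) [CommRing R] {m : ℕ} (K : Finset (Finset (Fin m))) :
    Module R (redHomology R K) :=
  inferInstanceAs (Module R
    (↥(cyclesOn R K) ⧸ ((boundariesOn R K).comap (cyclesOn R K).subtype)))

/-- The chain `c_I = Σ_{i∈I} (−1)^{|I_{<i}|} e_{I∖{i}}` associated to `I ⊆ [m]`. -/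
noncomputable def missingFaceChain (R : Type*) [CommRing R] {m : ℕ} (I : Finset (Fin m)) :
    Finset (Fin m) → R :=
  fun τ => ∑ i ∈ I, if I.erase i = τ then (-1 : R) ^ ((I.filter (· < i)).card) else 0

/-- The homology class `[∂Δ_I] ∈ H̃_{|I|−2}(K; R)` of a missing face `I`. -/
noncomputable def mfClass (R : Type*) [CommRing R] {m : ℕ} (K : Finset (Finset (Fin m)))
    (I : Finset (Fin m)) : redHomology R K :=
  letI := Classical.dec (missingFaceChain R I ∈ cyclesOn R K)
  if h : missingFaceChain R I ∈ cyclesOn R K then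
    (Submodule.Quotient.mk (⟨missingFaceChain R I, h⟩ : ↥(cyclesOn R K)) :
      ↥(cyclesOn R K) ⧸ ((boundariesOn R K).comap (cyclesOn R K).subtype))
  else 0

/-- `I` is a missing face of `K`: `I` is not a face but all its proper subsets are. -/
def IsMissingFace {m : ℕ} (K : Finset (Finset (Fin m))) (I : Finset (Fin m)) : Prop :=
  I ∉ K ∧ ∀ J ⊂ I, J ∈ K

/-- `K` is HMF over `R`: for each nonempty `J ⊆ [m]`, the reduced homology of the full
subcomplex `K_J` is generated by its missing-face classes. -/
def IsHMF (R : Type*) [CommRing R] {m : ℕ} (K : Finset (Finset (Fin m))) : Prop :=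
  ∀ J : Finset (Fin m), J.Nonempty →
    Submodule.span R
      ((fun I => mfClass R (K.filter (· ⊆ J)) I) ''
        {I | IsMissingFace (K.filter (· ⊆ J)) I}) = ⊤

/-!
For a full subcomplex `L = K_J`, the classes `[∂Δ_I]` generate `H̃_*(L; R)` iff every cycle lies
in `M_R`, the span of the chains `∂Δ_I` and of the boundaries. Reduction mod `p` maps the integral chains, boundaries and
`M_ℤ` onto their mod `p` counterparts, with kernel `p • C_ℤ` on chains. Lifting mod `p` cycles
along it shows that `Z_{ℤ/p} ≤ M_{ℤ/p}` implies `Z_ℤ ≤ M_ℤ + p Z_ℤ` and that `H̃_*(L; ℤ)` has no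
`p`-torsion, and conversely follows from `Z_ℤ ≤ M_ℤ` and the absence of `p`-torsion. As `Z_ℤ` is
finitely generated, `Z_ℤ ≤ M_ℤ + p Z_ℤ` for all primes `p` gives `Z_ℤ ≤ M_ℤ` by Nakayama's lemma at
every maximal ideal of `ℤ`.
-/

open Finset

theorem Submodule.le_of_le_sup_smul_of_isMaximal {R M : Type*} [CommRing R] [AddCommGroup M]
    [Module R M] {N P : Submodule R M} (hP : P.FG)
    (h : ∀ I : Ideal R, I.IsMaximal → P ≤ N ⊔ I • P) : P ≤ N := by
  -- by Nakayama, `N.colon P` contains an element `≡ 1` modulo each maximal ideal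
  have hcolon : N.colon P = ⊤ := by
    by_contra hne
    obtain ⟨I, hI, hle⟩ := Ideal.exists_le_maximal _ hne
    obtain ⟨r, hr1, hr⟩ := exists_sub_one_mem_and_smul_le_of_fg_of_le_sup hP le_rfl (h I hI)
    have hrI : r ∈ I := hle (mem_colon.2 fun x hx => hr (smul_mem_pointwise_smul x r P hx))
    exact hI.ne_top ((Ideal.eq_top_iff_one I).2 (by simpa using I.sub_mem hrI hr1))
  intro x hx
  simpa using mem_colon.1 (hcolon ▸ mem_top : (1 : R) ∈ N.colon P) x hx

theorem Int.exists_prime_natCast_mem_of_isMaximal (I : Ideal ℤ) [I.IsMaximal] :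
    ∃ p : ℕ, p.Prime ∧ (p : ℤ) ∈ I :=
  have : NeZero I := ⟨Ideal.IsMaximal.ne_bot_of_isIntegral_int I⟩
  ⟨_, Nat.absNorm_under_prime I, Int.absNorm_under_mem I⟩

theorem Submodule.le_of_forall_prime_le_sup_smul {M : Type*} [AddCommGroup M]
    {N P : Submodule ℤ M} (hP : P.FG) (h : ∀ p : ℕ, p.Prime → P ≤ N ⊔ Ideal.span {(p : ℤ)} • P) :
    P ≤ N := by
  refine le_of_le_sup_smul_of_isMaximal hP fun I hI => ?_
  obtain ⟨p, hp, hpI⟩ := Int.exists_prime_natCast_mem_of_isMaximal I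
  have hle : Ideal.span {(p : ℤ)} ≤ I := (Ideal.span_singleton_le_iff_mem I).2 hpI
  exact (h p hp).trans (sup_le_sup_left (smul_le.2 fun r hr x hx => smul_mem_smul (hle hr) hx) _)

theorem forall_zsmul_eq_zero_imp_iff_forall_prime {A : Type*} [AddCommGroup A] :
    (∀ (x : A) (n : ℤ), n ≠ 0 → n • x = 0 → x = 0) ↔
      ∀ p : ℕ, p.Prime → IsSMulRegular A (p : ℤ) := by
  simp only [isSMulRegular_iff_right_eq_zero_of_smul]
  refine ⟨fun h p hp x => h x p (Int.natCast_ne_zero.2 hp.ne_zero), fun h x n hn hnx => ?_⟩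
  rw [← natAbs_nsmul_eq_zero] at hnx
  suffices ∀ k : ℕ, k ≠ 0 → ∀ x : A, k • x = 0 → x = 0 from
    this _ (Int.natAbs_ne_zero.2 hn) x hnx
  intro k
  induction k using induction_on_primes with
  | zero => exact fun h0 => absurd rfl h0
  | one => simp
  | prime_mul p a hp ih =>
    intro hpa x hx
    refine ih (right_ne_zero_of_mul hpa) x (h p hp _ ?_)
    rwa [natCast_zsmul, ← mul_nsmul']

theorem ZMod.natCast_zsmul_eq_zero {p : ℕ} {M : Type*} [AddCommGroup M] [Module (ZMod p) M]
    (v : M) : (p : ℤ) • v = 0 := by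
  rw [← Int.cast_smul_eq_zsmul (ZMod p), Int.cast_natCast, ZMod.natCast_self, zero_smul]

namespace SimplicialChains

section Coefficients

variable {R : Type*} [CommRing R] {m : ℕ} {L : Finset (Finset (Fin m))}

noncomputable def boundaryMatrix (R : Type*) [CommRing R] (m : ℕ) :
    Matrix (Finset (Fin m)) (Finset (Fin m)) R :=
  Matrix.of fun τ J => ∑ j ∈ J, if J.erase j = τ then (-1 : R) ^ #{i ∈ J | i < j} else 0

theorem simplicialBoundary_eq_mulVecLin :
    simplicialBoundary R m = (boundaryMatrix R m).mulVecLin := rfl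

theorem simplicialBoundary_apply (x : Finset (Fin m) → R) (τ : Finset (Fin m)) :
    simplicialBoundary R m x τ = ∑ J, boundaryMatrix R m τ J * x J := rfl

theorem neg_one_pow_card_filter_erase_of_lt {J : Finset (Fin m)} {i j : Fin m} (hij : i < j) :
    (-1 : R) ^ #{k ∈ J.erase j | k < i} = (-1 : R) ^ #{k ∈ J | k < i} := by
  rw [filter_erase, erase_eq_of_notMem]
  simpa [mem_filter] using fun _ => hij.le

theorem neg_one_pow_card_filter_erase_of_gt {J : Finset (Fin m)} {i j : Fin m} (hj : j ∈ J)
    (hji : j < i) :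
    (-1 : R) ^ #{k ∈ J.erase j | k < i} = -(-1 : R) ^ #{k ∈ J | k < i} := by
  have hmem : j ∈ {k ∈ J | k < i} := mem_filter.2 ⟨hj, hji⟩
  obtain ⟨c, hc⟩ := Nat.exists_eq_add_one_of_ne_zero (card_pos.2 ⟨j, hmem⟩).ne'
  rw [filter_erase, card_erase_of_mem hmem, hc, Nat.add_sub_cancel, pow_succ, mul_neg_one, neg_neg]

theorem boundaryMatrix_mul_self : boundaryMatrix R m * boundaryMatrix R m = 0 := by
  ext σ J
  have hcol : ∑ τ, boundaryMatrix R m σ τ * boundaryMatrix R m τ J =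
      ∑ j ∈ J, boundaryMatrix R m σ (J.erase j) * (-1 : R) ^ #{i ∈ J | i < j} := by
    simp only [boundaryMatrix, Matrix.of_apply, mul_sum, mul_ite, mul_zero]
    rw [sum_comm]
    simp
  rw [Matrix.mul_apply, hcol, Matrix.zero_apply]
  simp only [boundaryMatrix, Matrix.of_apply, sum_mul, ite_mul, zero_mul]
  rw [sum_sigma']
  -- erasing `j` then `i` and erasing `i` then `j` give the same face with opposite signs
  refine sum_involution (fun p _ => ⟨p.2, p.1⟩) ?_ ?_ ?_ ?_
  · rintro ⟨j, i⟩ hp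
    obtain ⟨hj, hij, hi⟩ := by simpa only [mem_sigma, mem_erase] using hp
    rw [erase_right_comm (a := j)]
    rcases hij.lt_or_gt with h | h
    · rw [neg_one_pow_card_filter_erase_of_lt h, neg_one_pow_card_filter_erase_of_gt hi h]
      split_ifs <;> ring
    · rw [neg_one_pow_card_filter_erase_of_gt hj h, neg_one_pow_card_filter_erase_of_lt h]
      split_ifs <;> ring
  · rintro ⟨j, i⟩ hp - h
    simp only [mem_sigma, mem_erase] at hp
    exact hp.2.1 (congrArg Sigma.fst h)
  · rintro ⟨j, i⟩ hp
    simp only [mem_sigma, mem_erase] at hp ⊢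
    exact ⟨hp.2.2, hp.2.1.symm, hp.1⟩
  · intros
    rfl

theorem simplicialBoundary_simplicialBoundary (x : Finset (Fin m) → R) :
    simplicialBoundary R m (simplicialBoundary R m x) = 0 := by
  rw [simplicialBoundary_eq_mulVecLin, ← LinearMap.comp_apply, ← Matrix.mulVecLin_mul,
    boundaryMatrix_mul_self, Matrix.mulVecLin_zero, LinearMap.zero_apply]

theorem mem_chainsOn {x : Finset (Fin m) → R} :
    x ∈ chainsOn R L ↔ ∀ τ ∉ L, x τ = 0 := by
  simp only [chainsOn, Submodule.mem_pi, Set.mem_univ, true_imp_iff]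
  refine forall_congr' fun τ => ?_
  by_cases hτ : τ ∈ L <;> simp [hτ]

theorem mem_cyclesOn {x : Finset (Fin m) → R} :
    x ∈ cyclesOn R L ↔ x ∈ chainsOn R L ∧ simplicialBoundary R m x = 0 :=
  Submodule.mem_inf

theorem simplicialBoundary_mem_chainsOn (hL : IsLowerSet (L : Set (Finset (Fin m))))
    {x : Finset (Fin m) → R} (hx : x ∈ chainsOn R L) :
    simplicialBoundary R m x ∈ chainsOn R L := by
  rw [mem_chainsOn] at hx ⊢
  intro τ hτ
  rw [simplicialBoundary_apply]
  refine sum_eq_zero fun J _ => ?_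
  by_cases hJ : J ∈ L
  · refine mul_eq_zero_of_left (sum_eq_zero fun j _ => if_neg ?_) _
    rintro rfl
    exact hτ (hL (erase_subset j J) hJ)
  · rw [hx J hJ, mul_zero]

theorem boundariesOn_le_cyclesOn (hL : IsLowerSet (L : Set (Finset (Fin m)))) :
    boundariesOn R L ≤ cyclesOn R L := by
  rintro _ ⟨x, hx, rfl⟩
  exact mem_cyclesOn.2
    ⟨simplicialBoundary_mem_chainsOn hL hx, simplicialBoundary_simplicialBoundary x⟩

theorem missingFaceChain_eq_simplicialBoundary (I : Finset (Fin m)) :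
    missingFaceChain R I = simplicialBoundary R m (Pi.single I 1) := by
  rw [simplicialBoundary_eq_mulVecLin, Matrix.mulVecLin_apply, Matrix.mulVec_single_one]
  rfl

theorem missingFaceChain_mem_cyclesOn {I : Finset (Fin m)} (hI : IsMissingFace L I) :
    missingFaceChain R I ∈ cyclesOn R L := by
  refine mem_cyclesOn.2 ⟨mem_chainsOn.2 fun τ hτ => sum_eq_zero fun i hi => if_neg ?_, ?_⟩
  · rintro rfl
    exact hτ (hI.2 _ (erase_ssubset hi))
  · rw [missingFaceChain_eq_simplicialBoundary, simplicialBoundary_simplicialBoundary]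

noncomputable def missingFaceSpan (R : Type*) [CommRing R] {m : ℕ}
    (L : Finset (Finset (Fin m))) : Submodule R (Finset (Fin m) → R) :=
  Submodule.span R (missingFaceChain R '' {I | IsMissingFace L I}) ⊔ boundariesOn R L

theorem missingFaceSpan_le_cyclesOn (hL : IsLowerSet (L : Set (Finset (Fin m)))) :
    missingFaceSpan R L ≤ cyclesOn R L := by
  refine sup_le (Submodule.span_le.2 ?_) (boundariesOn_le_cyclesOn hL)
  rintro _ ⟨I, hI, rfl⟩
  exact missingFaceChain_mem_cyclesOn hI

theorem mfClass_of_isMissingFace {I : Finset (Fin m)} (hI : IsMissingFace L I) :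
    mfClass R L I = Submodule.Quotient.mk ⟨_, missingFaceChain_mem_cyclesOn hI⟩ :=
  dif_pos _

theorem span_mfClass_eq_top_iff (hL : IsLowerSet (L : Set (Finset (Fin m)))) :
    Submodule.span R (mfClass R L '' {I | IsMissingFace L I}) = ⊤ ↔
      cyclesOn R L ≤ missingFaceSpan R L := by
  set Z := cyclesOn R L
  set W := (boundariesOn R L).comap Z.subtype
  set S : Set Z := Z.subtype ⁻¹' (missingFaceChain R '' {I | IsMissingFace L I})
  have hclasses : mfClass R L '' {I | IsMissingFace L I} = W.mkQ '' S := by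
    ext c
    constructor
    · rintro ⟨I, hI, rfl⟩
      exact ⟨_, ⟨I, hI, rfl⟩, (mfClass_of_isMissingFace hI).symm⟩
    · rintro ⟨z, ⟨I, hI, hz⟩, rfl⟩
      exact ⟨I, hI, (mfClass_of_isMissingFace hI).trans (congrArg _ (Subtype.ext hz))⟩
  have hS : Z.subtype '' S = missingFaceChain R '' {I | IsMissingFace L I} := by
    refine Set.image_preimage_eq_of_subset ?_
    rintro _ ⟨I, hI, rfl⟩
    exact ⟨⟨_, missingFaceChain_mem_cyclesOn hI⟩, rfl⟩
  rw [hclasses]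
  change Submodule.span R (W.mkQ '' S) = ⊤ ↔ _
  rw [Submodule.span_image, Submodule.map_mkQ_eq_top,
    ← (Submodule.map_injective_of_injective Z.injective_subtype).eq_iff, Submodule.map_sup,
    Submodule.map_comap_subtype, Submodule.map_span, hS, Submodule.map_subtype_top,
    inf_eq_right.2 (boundariesOn_le_cyclesOn hL), sup_comm]
  exact ⟨fun h => h.ge, fun h => le_antisymm (missingFaceSpan_le_cyclesOn hL) h⟩

theorem isSMulRegular_redHomology_iff (r : R) :
    IsSMulRegular (redHomology R L) r ↔
      ∀ z ∈ cyclesOn R L, r • z ∈ boundariesOn R L → z ∈ boundariesOn R L := by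
  rw [isSMulRegular_iff_right_eq_zero_of_smul]
  let W := (boundariesOn R L).comap (cyclesOn R L).subtype
  refine ⟨fun h z hz hrz => ?_, fun h c hc => ?_⟩
  · have := h (Submodule.Quotient.mk ⟨z, hz⟩) ((Submodule.Quotient.mk_eq_zero W).2 hrz)
    exact (Submodule.Quotient.mk_eq_zero W).1 this
  · obtain ⟨⟨z, hz⟩, rfl⟩ := Submodule.Quotient.mk_surjective _ c
    exact (Submodule.Quotient.mk_eq_zero W).2 (h z hz ((Submodule.Quotient.mk_eq_zero W).1 hc))

end Coefficients

section ChangeOfCoefficients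

variable (R S : Type*) [CommRing R] [CommRing S] [Algebra R S] (m : ℕ)

noncomputable def chainMap : (Finset (Fin m) → R) →ₗ[R] (Finset (Fin m) → S) :=
  (Algebra.linearMap R S).compLeft _

variable {R S m}

theorem chainMap_apply (x : Finset (Fin m) → R) (τ : Finset (Fin m)) :
    chainMap R S m x τ = algebraMap R S (x τ) := rfl

theorem chainMap_simplicialBoundary (x : Finset (Fin m) → R) :
    chainMap R S m (simplicialBoundary R m x) = simplicialBoundary S m (chainMap R S m x) := by
  funext τ
  simp [chainMap_apply, simplicialBoundary_apply, boundaryMatrix, apply_ite]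

theorem chainMap_comp_simplicialBoundary :
    chainMap R S m ∘ₗ simplicialBoundary R m =
      (simplicialBoundary S m).restrictScalars R ∘ₗ chainMap R S m :=
  LinearMap.ext chainMap_simplicialBoundary

theorem chainMap_missingFaceChain (I : Finset (Fin m)) :
    chainMap R S m (missingFaceChain R I) = missingFaceChain S I := by
  rw [missingFaceChain_eq_simplicialBoundary, missingFaceChain_eq_simplicialBoundary,
    chainMap_simplicialBoundary]
  congr 1
  funext τ
  by_cases hτ : τ = I <;> simp [chainMap_apply, hτ]

variable {L : Finset (Finset (Fin m))}

theorem map_chainMap_chainsOn (hRS : Function.Surjective (algebraMap R S)) :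
    (chainsOn R L).map (chainMap R S m) = (chainsOn S L).restrictScalars R := by
  ext y
  simp only [Submodule.mem_map, Submodule.restrictScalars_mem, mem_chainsOn]
  constructor
  · rintro ⟨x, hx, rfl⟩ τ hτ
    rw [chainMap_apply, hx τ hτ, map_zero]
  · intro hy
    refine ⟨fun τ => if τ ∈ L then Function.surjInv hRS (y τ) else 0,
      fun τ hτ => if_neg hτ, funext fun τ => ?_⟩
    by_cases hτ : τ ∈ L
    · simp [chainMap_apply, hτ, Function.surjInv_eq hRS]
    · simp [chainMap_apply, hτ, hy τ hτ]

theorem map_chainMap_boundariesOn (hRS : Function.Surjective (algebraMap R S)) :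
    (boundariesOn R L).map (chainMap R S m) = (boundariesOn S L).restrictScalars R := by
  rw [boundariesOn, boundariesOn, Submodule.restrictScalars_map, ← map_chainMap_chainsOn hRS,
    ← Submodule.map_comp, ← Submodule.map_comp, chainMap_comp_simplicialBoundary]

theorem map_chainMap_missingFaceSpan (hRS : Function.Surjective (algebraMap R S)) :
    (missingFaceSpan R L).map (chainMap R S m) = (missingFaceSpan S L).restrictScalars R := by
  rw [missingFaceSpan, missingFaceSpan, Submodule.map_sup, Submodule.map_span,
    map_chainMap_boundariesOn hRS, Submodule.restrictScalars_sup,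
    Submodule.restrictScalars_span R S hRS, Set.image_image]
  simp only [chainMap_missingFaceChain]

end ChangeOfCoefficients

theorem exists_eq_smul_of_chainMap_eq_zero {m p : ℕ} {L : Finset (Finset (Fin m))}
    {x : Finset (Fin m) → ℤ} (hx : x ∈ chainsOn ℤ L) (h : chainMap ℤ (ZMod p) m x = 0) :
    ∃ z ∈ chainsOn ℤ L, x = (p : ℤ) • z := by
  have hdvd (τ : Finset (Fin m)) : (p : ℤ) ∣ x τ :=
    (ZMod.intCast_zmod_eq_zero_iff_dvd _ _).1 (congrFun h τ)
  refine ⟨fun τ => x τ / p, mem_chainsOn.2 fun τ hτ => ?_, funext fun τ => ?_⟩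
  · simp [mem_chainsOn.1 hx τ hτ]
  · exact (Int.mul_ediv_cancel' (hdvd τ)).symm

section ReductionModPrime

variable {m p : ℕ} {L : Finset (Finset (Fin m))}

theorem exists_mem_missingFaceSpan_add_smul (hL : IsLowerSet (L : Set (Finset (Fin m))))
    (hZ : cyclesOn (ZMod p) L ≤ missingFaceSpan (ZMod p) L) {y : Finset (Fin m) → ℤ}
    (hy : y ∈ chainsOn ℤ L)
    (hdy : simplicialBoundary (ZMod p) m (chainMap ℤ (ZMod p) m y) = 0) :
    ∃ x ∈ missingFaceSpan ℤ L, ∃ w ∈ chainsOn ℤ L, y = x + (p : ℤ) • w := by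
  have hπy : chainMap ℤ (ZMod p) m y ∈ cyclesOn (ZMod p) L :=
    mem_cyclesOn.2 ⟨(map_chainMap_chainsOn ZMod.intCast_surjective).le ⟨y, hy, rfl⟩, hdy⟩
  obtain ⟨x, hx, hxy⟩ := (map_chainMap_missingFaceSpan ZMod.intCast_surjective).ge (hZ hπy)
  have hxC : x ∈ chainsOn ℤ L := (mem_cyclesOn.1 (missingFaceSpan_le_cyclesOn hL hx)).1
  obtain ⟨w, hw, hyw⟩ := exists_eq_smul_of_chainMap_eq_zero (p := p) (sub_mem hy hxC)
    (by rw [map_sub, hxy, sub_self])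
  exact ⟨x, hx, w, hw, by rw [← hyw, add_sub_cancel]⟩

theorem mem_boundariesOn_of_natCast_smul_mem (hL : IsLowerSet (L : Set (Finset (Fin m))))
    (hp : p ≠ 0) (hZ : cyclesOn (ZMod p) L ≤ missingFaceSpan (ZMod p) L)
    {z : Finset (Fin m) → ℤ} (hz : (p : ℤ) • z ∈ boundariesOn ℤ L) :
    z ∈ boundariesOn ℤ L := by
  obtain ⟨y, hy, hyz⟩ := hz
  obtain ⟨x, hx, w, hw, rfl⟩ := exists_mem_missingFaceSpan_add_smul hL hZ hy
    (by rw [← chainMap_simplicialBoundary, hyz, map_smul, ZMod.natCast_zsmul_eq_zero])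
  have hdx := (mem_cyclesOn.1 (missingFaceSpan_le_cyclesOn hL hx)).2
  refine ⟨w, hw, smul_right_injective _ (Int.natCast_ne_zero.2 hp) ?_⟩
  simp only [← hyz, map_add, hdx, zero_add, map_smul]

theorem cyclesOn_le_sup_span_smul (hL : IsLowerSet (L : Set (Finset (Fin m))))
    (hp : p ≠ 0) (hZ : cyclesOn (ZMod p) L ≤ missingFaceSpan (ZMod p) L) :
    cyclesOn ℤ L ≤ missingFaceSpan ℤ L ⊔ Ideal.span {(p : ℤ)} • cyclesOn ℤ L := by
  intro y hy
  obtain ⟨hyC, hdy⟩ := mem_cyclesOn.1 hy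
  obtain ⟨x, hx, w, hw, rfl⟩ := exists_mem_missingFaceSpan_add_smul hL hZ hyC
    (by rw [← chainMap_simplicialBoundary, hdy, map_zero])
  have hdx := (mem_cyclesOn.1 (missingFaceSpan_le_cyclesOn hL hx)).2
  have hdw : simplicialBoundary ℤ m w = 0 := by
    refine (smul_eq_zero.1 ?_).resolve_left (Int.natCast_ne_zero.2 hp)
    rwa [map_add, hdx, zero_add, map_smul] at hdy
  exact Submodule.add_mem_sup hx
    (Submodule.smul_mem_smul (Ideal.mem_span_singleton_self _) (mem_cyclesOn.2 ⟨hw, hdw⟩))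

theorem cyclesOn_zmod_le_missingFaceSpan (hL : IsLowerSet (L : Set (Finset (Fin m))))
    (hp : p ≠ 0) (hZ : cyclesOn ℤ L ≤ missingFaceSpan ℤ L)
    (hB : ∀ z ∈ cyclesOn ℤ L, (p : ℤ) • z ∈ boundariesOn ℤ L → z ∈ boundariesOn ℤ L) :
    cyclesOn (ZMod p) L ≤ missingFaceSpan (ZMod p) L := by
  intro y hy
  obtain ⟨hyC, hdy⟩ := mem_cyclesOn.1 hy
  obtain ⟨x, hx, rfl⟩ := (map_chainMap_chainsOn ZMod.intCast_surjective).ge hyC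
  obtain ⟨z, hz, hdx⟩ := exists_eq_smul_of_chainMap_eq_zero (p := p)
    (simplicialBoundary_mem_chainsOn hL hx) (by rwa [chainMap_simplicialBoundary])
  have hdz : simplicialBoundary ℤ m z = 0 := by
    refine (smul_eq_zero.1 ?_).resolve_left (Int.natCast_ne_zero.2 hp)
    rw [← map_smul, ← hdx, simplicialBoundary_simplicialBoundary]
  obtain ⟨w, hw, rfl⟩ := hB z (mem_cyclesOn.2 ⟨hz, hdz⟩) ⟨x, hx, hdx⟩
  have hcycle : x - (p : ℤ) • w ∈ cyclesOn ℤ L := mem_cyclesOn.2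
    ⟨sub_mem hx (Submodule.smul_mem _ _ hw), by rw [map_sub, map_smul, hdx, sub_self]⟩
  have := (map_chainMap_missingFaceSpan (ZMod.intCast_surjective (n := p))).le
    ⟨_, hZ hcycle, rfl⟩
  rw [map_sub, map_smul, ZMod.natCast_zsmul_eq_zero, sub_zero] at this
  exact this

theorem forall_prime_cyclesOn_zmod_le_iff (hL : IsLowerSet (L : Set (Finset (Fin m)))) :
    (∀ p : ℕ, p.Prime → cyclesOn (ZMod p) L ≤ missingFaceSpan (ZMod p) L) ↔
      cyclesOn ℤ L ≤ missingFaceSpan ℤ L ∧ ∀ p : ℕ, p.Prime →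
        ∀ z ∈ cyclesOn ℤ L, (p : ℤ) • z ∈ boundariesOn ℤ L → z ∈ boundariesOn ℤ L where
  mp h := ⟨Submodule.le_of_forall_prime_le_sup_smul (IsNoetherian.noetherian _)
      fun p hp => cyclesOn_le_sup_span_smul hL hp.ne_zero (h p hp),
    fun p hp _ _ => mem_boundariesOn_of_natCast_smul_mem hL hp.ne_zero (h p hp)⟩
  mpr h p hp := cyclesOn_zmod_le_missingFaceSpan hL hp.ne_zero h.1 (h.2 p hp)

theorem forall_prime_span_mfClass_zmod_eq_top_iff (hL : IsLowerSet (L : Set (Finset (Fin m)))) :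
    (∀ p : ℕ, p.Prime →
        Submodule.span (ZMod p) (mfClass (ZMod p) L '' {I | IsMissingFace L I}) = ⊤) ↔
      Submodule.span ℤ (mfClass ℤ L '' {I | IsMissingFace L I}) = ⊤ ∧
        ∀ (x : redHomology ℤ L) (n : ℤ), n ≠ 0 → n • x = 0 → x = 0 := by
  refine (forall₂_congr fun p _ => span_mfClass_eq_top_iff hL).trans <|
    (forall_prime_cyclesOn_zmod_le_iff hL).trans <|
      and_congr (span_mfClass_eq_top_iff hL).symm <|
        (forall₂_congr fun p _ => (isSMulRegular_redHomology_iff _).symm).trans ?_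
  exact forall_zsmul_eq_zero_imp_iff_forall_prime.symm

end ReductionModPrime

end SimplicialChains

theorem stmt8_general {m : ℕ} (K : Finset (Finset (Fin m)))
    (hdown : ∀ σ ∈ K, ∀ τ ⊆ σ, τ ∈ K) :
    (∀ p : ℕ, p.Prime → IsHMF (ZMod p) K) ↔
      (IsHMF ℤ K ∧
        ∀ J : Finset (Fin m), J.Nonempty →
          ∀ (x : redHomology ℤ (K.filter (· ⊆ J))) (n : ℤ), n ≠ 0 → n • x = 0 → x = 0) := by
  have hL (J : Finset (Fin m)) : IsLowerSet (↑(K.filter (· ⊆ J)) : Set (Finset (Fin m))) := by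
    rw [coe_filter]
    exact fun σ τ hτσ hσ => ⟨hdown σ hσ.1 τ hτσ, hτσ.trans hσ.2⟩
  have key J := SimplicialChains.forall_prime_span_mfClass_zmod_eq_top_iff (hL J)
  refine ⟨fun h => ⟨fun J hJ => ?_, fun J hJ => ?_⟩, fun ⟨h1, h2⟩ p hp J hJ => ?_⟩
  · exact ((key J).1 fun p hp => h p hp J hJ).1
  · exact ((key J).1 fun p hp => h p hp J hJ).2
  · exact (key J).2 ⟨h1 J hJ, h2 J hJ⟩ p hp

theorem stmt8 {m : ℕ} (K : Finset (Finset (Fin m)))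
    (hdown : ∀ σ ∈ K, ∀ τ ⊆ σ, τ ∈ K) (hempty : (∅ : Finset (Fin m)) ∈ K) :
    (∀ p : ℕ, p.Prime → IsHMF (ZMod p) K) ↔
      (IsHMF ℤ K ∧
        ∀ J : Finset (Fin m), J.Nonempty →
          ∀ (x : redHomology ℤ (K.filter (· ⊆ J))) (n : ℤ), n ≠ 0 → n • x = 0 → x = 0) :=
  stmt8_general K hdown
end

section
/- If a simplicial complex K has reduced homology generated by classes of missing faces (over some ring k with H̃_*(K;k) ≠ 0 only via missing faces), then the 1-skeleton of K is a chordal graph; that is, every cycle of length ≥ 4 in K^1 has a chord. -/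
open Finset

section Chains

variable {R : Type*} [CommRing R] {m : ℕ}

lemma mem_chainsOn_iff {K : Finset (Finset (Fin m))} {c : Finset (Fin m) → R} :
    c ∈ chainsOn R K ↔ ∀ σ ∉ K, c σ = 0 := by
  simp only [chainsOn, Submodule.mem_pi, Set.mem_univ, true_imp_iff]
  refine forall_congr' fun σ => ?_
  split_ifs with hσ <;> simp [hσ]

lemma simplicialBoundary_apply (c : Finset (Fin m) → R) (τ : Finset (Fin m)) :
    simplicialBoundary R m c τ = ∑ σ, missingFaceChain R σ τ * c σ := rfl

lemma simplicialBoundary_single (σ : Finset (Fin m)) :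
    simplicialBoundary R m (Pi.single σ 1) = missingFaceChain R σ := by
  funext τ
  simp [simplicialBoundary_apply, Pi.single_apply]

lemma missingFaceChain_apply_eq_zero {I τ : Finset (Fin m)}
    (h : τ ⊆ I → I.card ≠ τ.card + 1) : missingFaceChain R I τ = 0 :=
  sum_eq_zero fun i hi => if_neg fun (he : I.erase i = τ) =>
    h (he ▸ erase_subset i I) (he ▸ (card_erase_add_one hi).symm)

lemma simplicialBoundary_apply_eq_zero {K : Finset (Finset (Fin m))} {c : Finset (Fin m) → R}
    (hc : c ∈ chainsOn R K) {τ : Finset (Fin m)}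
    (hτ : ∀ σ ∈ K, τ ⊆ σ → σ.card ≠ τ.card + 1) : simplicialBoundary R m c τ = 0 := by
  refine (simplicialBoundary_apply c τ).trans (sum_eq_zero fun σ _ => ?_)
  by_cases hσ : σ ∈ K
  · rw [missingFaceChain_apply_eq_zero (hτ σ hσ), zero_mul]
  · rw [mem_chainsOn_iff.mp hc σ hσ, mul_zero]

lemma missingFaceChain_pair {a b : Fin m} (hab : a ≠ b) :
    (if a < b then (1 : R) else -1) • missingFaceChain R {a, b} =
      Pi.single {b} 1 - Pi.single {a} 1 := by
  have hea : ({a, b} : Finset (Fin m)).erase a = {b} := erase_insert (by simpa using hab)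
  have heb : ({a, b} : Finset (Fin m)).erase b = {a} := by
    rw [pair_comm]; exact erase_insert (by simpa using hab.symm)
  funext τ
  rcases hab.lt_or_gt with h | h
  all_goals
    simp only [missingFaceChain, Pi.smul_apply, Pi.sub_apply, Pi.single_apply, smul_eq_mul,
      sum_pair hab, hea, heb, filter_insert, filter_singleton, h, lt_asymm h, lt_self_iff_false,
      ↓reduceIte, insert_empty_eq, card_empty, card_singleton, pow_zero, pow_one, eq_comm]
    split_ifs <;> ring

end Chains

lemma map_eq_zero_of_span_mfClass_eq_top {R M : Type*} [CommRing R] [AddCommGroup M] [Module R M]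
    {m : ℕ} {K : Finset (Finset (Fin m))} {S : Set (Finset (Fin m))}
    (hspan : Submodule.span R (mfClass R K '' S) = ⊤) (φ : (Finset (Fin m) → R) →ₗ[R] M)
    (hbd : ∀ x ∈ boundariesOn R K, φ x = 0) (hmf : ∀ I ∈ S, φ (missingFaceChain R I) = 0)
    {z : Finset (Fin m) → R} (hz : z ∈ cyclesOn R K) : φ z = 0 := by
  let Φ : redHomology R K →ₗ[R] M :=
    Submodule.liftQ _ (φ ∘ₗ (cyclesOn R K).subtype) fun x hx => hbd x hx
  have hΦ : Φ = 0 := LinearMap.ext_on hspan <| by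
    rintro _ ⟨I, hI, rfl⟩
    show Φ (mfClass R K I) = 0
    by_cases h : missingFaceChain R I ∈ cyclesOn R K
    · rw [show mfClass R K I = Submodule.Quotient.mk ⟨_, h⟩ from dif_pos h]
      exact hmf I hI
    · rw [show mfClass R K I = 0 from dif_neg h, map_zero]
  exact LinearMap.congr_fun hΦ (Submodule.Quotient.mk ⟨z, hz⟩)

section CycleChain

variable (R : Type*) [CommRing R] {m n : ℕ} [NeZero n] (f : ZMod n → Fin m)

noncomputable def cycleChain : Finset (Fin m) → R :=
  ∑ i, (if f i < f (i + 1) then (1 : R) else -1) • Pi.single {f i, f (i + 1)} 1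

variable {R f}

lemma cycleChain_mem_chainsOn {K : Finset (Finset (Fin m))}
    (hK : ∀ i, ({f i, f (i + 1)} : Finset (Fin m)) ∈ K) : cycleChain R f ∈ chainsOn R K :=
  Submodule.sum_mem _ fun i _ => Submodule.smul_mem _ _ <| mem_chainsOn_iff.mpr fun _ hσ =>
    Pi.single_eq_of_ne (ne_of_mem_of_not_mem (hK i) hσ).symm 1

lemma simplicialBoundary_cycleChain (hf : ∀ i, f i ≠ f (i + 1)) :
    simplicialBoundary R m (cycleChain R f) = 0 := by
  simp only [cycleChain, map_sum, map_smul, simplicialBoundary_single, missingFaceChain_pair (hf _),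
    sum_sub_distrib]
  exact sub_eq_zero.mpr (Fintype.sum_equiv (Equiv.addRight 1) _ _ fun _ => rfl)

lemma cycleChain_apply_edge (hf : Function.Injective f) (h2 : (2 : ZMod n) ≠ 0) (i : ZMod n) :
    cycleChain R f {f i, f (i + 1)} = if f i < f (i + 1) then 1 else -1 := by
  rw [cycleChain, Finset.sum_apply, sum_eq_single_of_mem i (mem_univ i)]
  · simp
  · intro j _ hji
    have hne : ({f j, f (j + 1)} : Finset (Fin m)) ≠ {f i, f (i + 1)} := by
      rw [Ne, ← coe_inj, coe_pair, coe_pair, Set.pair_eq_pair_iff]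
      simp only [hf.eq_iff]
      rintro (⟨h, -⟩ | ⟨rfl, h⟩)
      · exact hji h
      · exact h2 (by linear_combination h)
    simp [Pi.single_eq_of_ne hne.symm]

end CycleChain

lemma ZMod.natCast_ne_zero_of_pos_of_lt {n a : ℕ} (h0 : 0 < a) (h : a < n) : (a : ZMod n) ≠ 0 := by
  rw [Ne, ZMod.natCast_eq_zero_iff]
  exact Nat.not_dvd_of_pos_of_lt h0 h

lemma ZMod.not_triangle_of_four_le {n : ℕ} (hn : 4 ≤ n) {a b c : ZMod n}
    (hab : a ≠ b) (hbc : b ≠ c) :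
    ¬ ((b = a + 1 ∨ a = b + 1) ∧ (c = a + 1 ∨ a = c + 1) ∧ (c = b + 1 ∨ b = c + 1)) := by
  have h1 : ((1 : ℕ) : ZMod n) ≠ 0 := ZMod.natCast_ne_zero_of_pos_of_lt one_pos (by omega)
  have h3 : ((3 : ℕ) : ZMod n) ≠ 0 := ZMod.natCast_ne_zero_of_pos_of_lt three_pos (by omega)
  push_cast at h1 h3
  rintro ⟨hab' | hab', hac' | hac', hbc' | hbc'⟩
  · exact hbc (hab'.trans hac'.symm)
  · exact hbc (hab'.trans hac'.symm)
  · exact h3 (by linear_combination -hab' - hac' - hbc')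
  · exact hab (hbc'.trans hac'.symm).symm
  · exact h1 (by linear_combination hbc' - hac' - hab')
  · exact h3 (by linear_combination -hab' - hac' - hbc')
  · exact hbc (add_right_cancel (hab'.symm.trans hac'))
  · exact hbc (add_right_cancel (hab'.symm.trans hac'))

lemma not_forall_ssubset_mem_of_chordless {m n : ℕ} [NeZero n] {K : Finset (Finset (Fin m))}
    (hn : 4 ≤ n) {f : ZMod n → Fin m}
    (hchord : ∀ i j : ZMod n, j ≠ i → j ≠ i + 1 → i ≠ j + 1 → ({f i, f j} : Finset (Fin m)) ∉ K)
    {σ : Finset (Fin m)} (hσ : σ.card = 3) :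
    ¬ ∀ ρ ⊂ σ, ρ ∈ K.filter (· ⊆ univ.image f) := by
  intro hsub
  have adj : ∀ i j, i ≠ j → ({f i, f j} : Finset (Fin m)) ∈ K → j = i + 1 ∨ i = j + 1 := by
    intro i j hij h
    by_contra! hne
    exact hchord i j hij.symm hne.1 hne.2 h
  obtain ⟨x, y, z, hxy, hxz, hyz, rfl⟩ := card_eq_three.mp hσ
  have hmem : ∀ ρ ⊆ {x, y, z}, ρ.card < 3 → ρ ∈ K ∧ ρ ⊆ univ.image f := fun ρ hρ hc =>
    mem_filter.mp (hsub ρ (ssubset_of_subset_of_ne hρ (by rintro rfl; omega)))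
  have hvert : ∀ v ∈ ({x, y, z} : Finset (Fin m)), ∃ a, f a = v := fun v hv => by
    simpa using (hmem {v} (singleton_subset_iff.mpr hv) (by simp)).2
  obtain ⟨a, rfl⟩ := hvert x (by simp)
  obtain ⟨b, rfl⟩ := hvert y (by simp)
  obtain ⟨c, rfl⟩ := hvert z (by simp)
  refine ZMod.not_triangle_of_four_le hn (ne_of_apply_ne f hxy) (ne_of_apply_ne f hyz)
    ⟨adj a b (ne_of_apply_ne f hxy) ?_, adj a c (ne_of_apply_ne f hxz) ?_,
      adj b c (ne_of_apply_ne f hyz) ?_⟩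
  · exact (hmem _ (by simp) (by simp [card_pair hxy])).1
  · exact (hmem _ (by simp) (by simp [card_pair hxz])).1
  · exact (hmem _ (by simp) (by simp [card_pair hyz])).1

theorem stmt10_general (k : Type*) [CommRing k] [Nontrivial k]
    {m : ℕ} (K : Finset (Finset (Fin m)))
    (hdown : ∀ σ ∈ K, ∀ τ ⊆ σ, τ ∈ K)
    -- `K` is HMF over `k`: the homology of every full subcomplex is generated by
    -- missing-face classes
    (hHMF : ∀ J : Finset (Fin m), J.Nonempty →
      Submodule.span k
        ((fun I => mfClass k (K.filter (· ⊆ J)) I) ''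
          {I | IsMissingFace (K.filter (· ⊆ J)) I}) = ⊤) :
    -- the 1-skeleton of `K` is chordal
    ∀ n : ℕ, 4 ≤ n → ∀ f : ZMod n → Fin m, Function.Injective f →
      (∀ i : ZMod n, ({f i, f (i + 1)} : Finset (Fin m)) ∈ K) →
      ∃ i j : ZMod n, j ≠ i ∧ j ≠ i + 1 ∧ i ≠ j + 1 ∧
        ({f i, f j} : Finset (Fin m)) ∈ K := by
  intro n hn f hf hedges
  by_contra! hchord
  have : NeZero n := ⟨by omega⟩
  have h1 : (1 : ZMod n) ≠ 0 := by
    exact_mod_cast ZMod.natCast_ne_zero_of_pos_of_lt one_pos (by omega : 1 < n)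
  have h2 : (2 : ZMod n) ≠ 0 := by
    exact_mod_cast ZMod.natCast_ne_zero_of_pos_of_lt two_pos (by omega : 2 < n)
  set J := univ.image f
  have hτ : ({f 0, f 1} : Finset (Fin m)).card = 2 := card_pair (hf.ne h1.symm)
  have hnoTriangle := fun σ hσ => not_forall_ssubset_mem_of_chordless hn hchord (σ := σ) hσ
  have hz : cycleChain k f ∈ cyclesOn k (K.filter (· ⊆ J)) :=
    ⟨cycleChain_mem_chainsOn fun i => mem_filter.mpr ⟨hedges i, by simp [J, insert_subset_iff]⟩,
      simplicialBoundary_cycleChain fun i => hf.ne (by simpa using h1)⟩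
  have hvanish : cycleChain k f {f 0, f 1} = 0 := by
    refine map_eq_zero_of_span_mfClass_eq_top (hHMF J ⟨f 0, mem_image_of_mem f (mem_univ 0)⟩)
      (LinearMap.proj _) ?_ (fun I hI => missingFaceChain_apply_eq_zero fun _ hcard =>
        hnoTriangle I (by omega) hI.2) hz
    rintro _ ⟨c, hc, rfl⟩
    refine simplicialBoundary_apply_eq_zero hc fun σ hσ _ hcard => hnoTriangle σ (by omega) ?_
    exact fun ρ hρ => mem_filter.mpr
      ⟨hdown σ (mem_filter.mp hσ).1 ρ hρ.subset, hρ.subset.trans (mem_filter.mp hσ).2⟩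
  have hsign := cycleChain_apply_edge (R := k) hf h2 0
  rw [zero_add] at hsign
  rw [hsign] at hvanish
  split_ifs at hvanish <;> simp at hvanish

theorem stmt10 (k : Type*) [CommRing k] [Nontrivial k]
    {m : ℕ} (K : Finset (Finset (Fin m)))
    (hdown : ∀ σ ∈ K, ∀ τ ⊆ σ, τ ∈ K) (hempty : (∅ : Finset (Fin m)) ∈ K)
    -- `K` is HMF over `k`: the homology of every full subcomplex is generated by
    -- missing-face classes
    (hHMF : ∀ J : Finset (Fin m), J.Nonempty →
      Submodule.span k
        ((fun I => mfClass k (K.filter (· ⊆ J)) I) ''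
          {I | IsMissingFace (K.filter (· ⊆ J)) I}) = ⊤) :
    -- the 1-skeleton of `K` is chordal
    ∀ n : ℕ, 4 ≤ n → ∀ f : ZMod n → Fin m, Function.Injective f →
      (∀ i : ZMod n, ({f i, f (i + 1)} : Finset (Fin m)) ∈ K) →
      ∃ i j : ZMod n, j ≠ i ∧ j ≠ i + 1 ∧ i ≠ j + 1 ∧
        ({f i, f j} : Finset (Fin m)) ∈ K :=
  stmt10_general k K hdown hHMF
end
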